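/- Let P_1, ..., P_m be special ample polytopes, (x_1, ..., x_m) ∈ Λ(P_1) × ⋯ × Λ(P_m) a tuple of winning elements, and suppose (x_1', ..., x_m') is obtained from it by a simple move: for some simple root α and indices j, k with ⟨x_j, α^∨⟩ ≤ −1 and ⟨x_k, α^∨⟩ ≥ 1, set x_j' = x_j + α, x_k' = x_k − α, and x_ℓ' = x_ℓ otherwise. Then (x_1', ..., x_m') ∈ Λ(P_1) × ⋯ × Λ(P_m) and each x_ℓ' is winning. -/

import Mathlib

open scoped BigOperators

variable {V : Type*} [NormedAddCommGroup V] [InnerProductSpace ℝ V]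

/-- The pairing `⟨x, y^∨⟩ = 2(x,y)/(y,y)` of `x` with the coroot of `y`. -/
noncomputable def pairing (x y : V) : ℝ := 2 * (inner ℝ x y : ℝ) / (inner ℝ y y : ℝ)

/-- An irreducible, reduced, crystallographic root system in a Euclidean space `V`. -/
structure RootSystemData (V : Type*) [NormedAddCommGroup V] [InnerProductSpace ℝ V] :
    Type _ where
  Δ : Set V
  finite : Δ.Finite
  nonzero : ∀ α ∈ Δ, α ≠ 0
  spanning : Submodule.span ℝ Δ = ⊤
  neg_mem : ∀ α ∈ Δ, -α ∈ Δ
  reduced : ∀ α ∈ Δ, ∀ c : ℝ, c • α ∈ Δ → c = 1 ∨ c = -1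
  crystallographic : ∀ α ∈ Δ, ∀ β ∈ Δ, ∃ n : ℤ, pairing α β = n
  reflect_mem : ∀ α ∈ Δ, ∀ β ∈ Δ, β - pairing β α • α ∈ Δ
  irreducible : ∀ s t : Set V, s ∪ t = Δ →
    (∀ α ∈ s, ∀ β ∈ t, (inner ℝ α β : ℝ) = 0) → s = ∅ ∨ t = ∅

variable {R : RootSystemData V}

/-- A base (system of simple roots) of the root system, corresponding to a Weyl chamber. -/
structure Base (R : RootSystemData V) where
  S : Finset V
  subset : ↑S ⊆ R.Δ
  indep : LinearIndependent ℝ ((↑) : {x : V // x ∈ S} → V)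
  decomp : ∀ α ∈ R.Δ, ∃ c : V → ℤ, α = ∑ β ∈ S, (c β : ℝ) • β ∧
    ((∀ β ∈ S, 0 ≤ c β) ∨ (∀ β ∈ S, c β ≤ 0))

/-- `x` is dominant with respect to the chamber given by the base `B`. -/
def IsDominant (B : Base R) (x : V) : Prop := ∀ α ∈ B.S, 0 ≤ pairing x α

/-- `β` is a positive root with respect to the base `B`. -/
def Base.IsPos (B : Base R) (β : V) : Prop :=
  β ∈ R.Δ ∧ ∃ c : V → ℕ, β = ∑ α ∈ B.S, (c α : ℝ) • α

/-- The dominance order: `y - x` is a nonnegative integer combination of simple roots. -/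
def domLE (B : Base R) (x y : V) : Prop :=
  ∃ c : V → ℕ, y - x = ∑ α ∈ B.S, (c α : ℝ) • α

/-- `x` is a weight: its pairing with every coroot is an integer. -/
def IsWeight (R : RootSystemData V) (x : V) : Prop :=
  ∀ α ∈ R.Δ, ∃ n : ℤ, pairing x α = n

/-- An ample (`T`-equivariant ample) polytope for the toric variety of the Weyl fan:
vertices `μ B` indexed by Weyl chambers (equivalently, bases `B`), such that vertices at
adjacent chambers differ by a positive integer multiple of the separating root. The chamber
adjacent to `B` across the wall of the simple root `α ∈ B.S` is the one whose base is the
reflection `s_α(B)`. -/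
structure AmplePolytope (R : RootSystemData V) where
  μ : Base R → V
  weight : ∀ B : Base R, IsWeight R (μ B)
  ample : ∀ B B' : Base R, ∀ α ∈ B.S,
    (∀ β : V, β ∈ B'.S ↔ ∃ γ ∈ B.S, β = γ - pairing γ α • α) →
    ∃ r : ℤ, 0 < r ∧ μ B - μ B' = (r : ℝ) • α

/-- The polytope `P` itself: the convex hull of its vertices. -/
noncomputable def AmplePolytope.carrier (P : AmplePolytope R) : Set V :=
  convexHull ℝ (Set.range P.μ)

/-- The root lattice `Y`. -/
def rootLattice (R : RootSystemData V) : AddSubgroup V := AddSubgroup.closure R.Δ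

/-- `Λ(P)`: the lattice points of `P` lying in the coset `Y + μ_σ` of the root lattice. -/
noncomputable def latticePts (P : AmplePolytope R) : Set V :=
  {x | x ∈ P.carrier ∧ ∀ B : Base R, x - P.μ B ∈ rootLattice R}

/-- The polytope is special: each vertex is dominant for its own chamber. -/
def IsSpecial (P : AmplePolytope R) : Prop := ∀ B : Base R, ∀ α ∈ B.S, 0 ≤ pairing (P.μ B) α

/-- One step of the numbers game: firing the vertex corresponding to the simple root `α`
replaces `x` by its reflection `x - ⟨x, α^∨⟩ α`. -/
noncomputable def fireRoot (x α : V) : V := x - pairing x α • α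

/-- The result of playing the firing sequence `l` starting from `x`. -/
noncomputable def playRes (x : V) (l : List V) : V := l.foldl fireRoot x

/-- Legality of a firing sequence for the usual numbers game: each fired simple root has
negative amplitude when fired. -/
def NGLegal (B : Base R) : V → List V → Prop
  | _, [] => True
  | x, α :: t => α ∈ B.S ∧ pairing x α < 0 ∧ NGLegal B (fireRoot x α) t

/-- A configuration is allowed in the numbers game with a cutoff: all amplitudes `≥ -1`. -/
def AllowedConf (B : Base R) (x : V) : Prop := ∀ α ∈ B.S, -1 ≤ pairing x α

/-- Legality for the numbers game with a cutoff: fired amplitudes are negative, and every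
configuration along the way (including the first and last) is allowed. -/
def CutoffLegal (B : Base R) : V → List V → Prop
  | x, [] => AllowedConf B x
  | x, α :: t => AllowedConf B x ∧ α ∈ B.S ∧ pairing x α < 0 ∧ CutoffLegal B (fireRoot x α) t

/-- `x` is winning for the numbers game with a cutoff. -/
def CutoffWinning (B : Base R) (x : V) : Prop :=
  ∃ l : List V, CutoffLegal B x l ∧ IsDominant B (playRes x l)

/-- The winning criterion: `⟨x, β^∨⟩ ≥ -1` for all positive roots `β`. -/
def WinningCrit (B : Base R) (x : V) : Prop := ∀ β : V, B.IsPos β → -1 ≤ pairing x β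

/-- `α` is `P`-progressive for `x`: either `x` is dominant and `α` has minimum length among
simple roots with `x + α ⪯ μ`, or `⟨x, α^∨⟩ ≤ -1`. -/
def Progressive (B : Base R) (P : AmplePolytope R) (x α : V) : Prop :=
  α ∈ B.S ∧
    ((IsDominant B x ∧ domLE B (x + α) (P.μ B) ∧
        ∀ β ∈ B.S, domLE B (x + β) (P.μ B) → ‖α‖ ≤ ‖β‖) ∨
      pairing x α ≤ -1)

/-!
Write `μ_C` for the vertex of `P` at the chamber with base `C`. Since `x_j` is winning,
`⟨x_j, α^∨⟩ = -1` and `x_j + α = s_α x_j`; as `s_α` permutes the positive roots other than `α`,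
both `x_j + α` and `x_k - α` stay winning.

For membership, `P` is the intersection over all bases `C` of the cones `μ_C - ℝ≥0 C`: `μ_C`
maximizes every linear form that is nonnegative on `C`, because a form positive on `C` has `C` as
its only maximizing chamber (the ample condition makes it nonnegative on the base of any
maximizing chamber). So it suffices that `μ_C - x - δ` lies in the cone of `C` whenever `δ` is a
`C`-positive root with `⟨x, δ^∨⟩ ≤ -1`. This goes by induction on the height of `δ`: reflecting
`C` in a simple root `γ` with `⟨δ, γ^∨⟩ > 0` lowers the height and keeps the coordinates other
than `γ`, so only the case of a single such `γ` remains, where the integrality of the coordinates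
and the specialness of `P` at `C` and at the adjacent chamber settle the last coordinate.
-/

open RealInnerProductSpace Classical Filter Topology

lemma pairing_eq_mul_inner (x y : V) : pairing x y = 2 / ⟪y, y⟫ * ⟪x, y⟫ := by
  rw [pairing, div_mul_eq_mul_div, mul_comm]

lemma two_div_inner_self_pos {y : V} (hy : y ≠ 0) : 0 < 2 / ⟪y, y⟫ :=
  div_pos two_pos (real_inner_self_pos.2 hy)

lemma pairing_pos_iff {x y : V} (hy : y ≠ 0) : 0 < pairing x y ↔ 0 < ⟪x, y⟫ := by
  rw [pairing_eq_mul_inner]; exact mul_pos_iff_of_pos_left (two_div_inner_self_pos hy)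

lemma pairing_nonneg_iff {x y : V} (hy : y ≠ 0) : 0 ≤ pairing x y ↔ 0 ≤ ⟪x, y⟫ := by
  rw [pairing_eq_mul_inner]; exact mul_nonneg_iff_of_pos_left (two_div_inner_self_pos hy)

lemma pairing_eq_zero_iff {x y : V} (hy : y ≠ 0) : pairing x y = 0 ↔ ⟪x, y⟫ = 0 := by
  rw [pairing_eq_mul_inner]; exact mul_eq_zero_iff_left (two_div_inner_self_pos hy).ne'

lemma pairing_pos_comm (x y : V) : 0 < pairing x y ↔ 0 < pairing y x := by
  rcases eq_or_ne x 0 with rfl | hx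
  · simp [pairing]
  rcases eq_or_ne y 0 with rfl | hy
  · simp [pairing]
  rw [pairing_pos_iff hy, pairing_pos_iff hx, real_inner_comm]

lemma pairing_self {y : V} (hy : y ≠ 0) : pairing y y = 2 := by
  rw [pairing, mul_div_assoc, div_self (real_inner_self_pos.2 hy).ne', mul_one]

lemma pairing_mul_inner_self (x : V) {y : V} (hy : y ≠ 0) :
    pairing x y * ⟪y, y⟫ = 2 * ⟪x, y⟫ :=
  div_mul_cancel₀ _ (real_inner_self_pos.2 hy).ne'

lemma pairing_neg_right (x y : V) : pairing x (-y) = -pairing x y := by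
  simp only [pairing, inner_neg_right, inner_neg_left, neg_neg, mul_neg, neg_div]

noncomputable def coroot (y : V) : V →ₗ[ℝ] ℝ where
  toFun x := pairing x y
  map_add' x z := by simp only [pairing, inner_add_left]; ring
  map_smul' c x := by simp only [pairing, real_inner_smul_left, smul_eq_mul, RingHom.id_apply]; ring

lemma pairing_add_left (x y z : V) : pairing (x + y) z = pairing x z + pairing y z :=
  map_add (coroot z) x y

lemma pairing_sub_left (x y z : V) : pairing (x - y) z = pairing x z - pairing y z :=
  map_sub (coroot z) x y

noncomputable def rootReflection {γ : V} (hγ : γ ≠ 0) : V ≃ₗ[ℝ] V :=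
  Module.reflection (f := coroot γ) (pairing_self hγ)

@[simp]
lemma rootReflection_apply {γ : V} (hγ : γ ≠ 0) (x : V) : rootReflection hγ x = fireRoot x γ :=
  rfl

lemma fireRoot_fireRoot (x : V) {γ : V} (hγ : γ ≠ 0) : fireRoot (fireRoot x γ) γ = x :=
  (rootReflection hγ).symm_apply_apply x

lemma pairing_fireRoot_right (x : V) {β α : V} (hβ : β ≠ 0) (hα : α ≠ 0) :
    pairing x (fireRoot β α) = pairing x β - pairing x α * pairing α β := by
  have hb := (real_inner_self_pos.2 hβ).ne'
  have ha := (real_inner_self_pos.2 hα).ne'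
  have hnorm : ⟪fireRoot β α, fireRoot β α⟫ = ⟪β, β⟫ := by
    simp only [pairing, fireRoot, inner_sub_left, inner_sub_right, real_inner_smul_left,
      real_inner_smul_right, real_inner_comm α β]
    field_simp
    ring
  rw [pairing, hnorm]
  simp only [pairing, fireRoot, inner_sub_right, real_inner_smul_right, real_inner_comm α β]
  field_simp

lemma RootSystemData.one_le_pairing (R : RootSystemData V) {α β : V} (hα : α ∈ R.Δ)
    (hβ : β ∈ R.Δ) (h : 0 < pairing α β) : 1 ≤ pairing α β := by
  obtain ⟨n, hn⟩ := R.crystallographic α hα β hβ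
  rw [hn] at h ⊢
  exact_mod_cast Int.cast_pos.1 h

lemma one_le_of_mem_range_intCast {a : ℝ} (ha : a ∈ (Int.castAddHom ℝ).range) (h : 0 < a) :
    1 ≤ a := by
  obtain ⟨n, rfl⟩ := ha
  simp only [Int.coe_castAddHom, Int.cast_pos] at h ⊢
  exact_mod_cast h

lemma le_neg_one_of_mem_range_intCast {a : ℝ} (ha : a ∈ (Int.castAddHom ℝ).range) (h : a < 0) :
    a ≤ -1 := by
  obtain ⟨n, rfl⟩ := ha
  simp only [Int.coe_castAddHom, Int.cast_lt_zero] at h ⊢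
  exact_mod_cast Int.le_sub_one_of_lt h

namespace Base

variable (C : Base R)

lemma mem_Δ {γ : V} (hγ : γ ∈ C.S) : γ ∈ R.Δ := C.subset hγ

lemma ne_zero {γ : V} (hγ : γ ∈ C.S) : γ ≠ 0 := R.nonzero γ (C.mem_Δ hγ)

lemma span_eq_top : Submodule.span ℝ (C.S : Set V) = ⊤ := by
  refine eq_top_iff.2 (R.spanning ▸ Submodule.span_le.2 fun α hα => ?_)
  obtain ⟨c, rfl, -⟩ := C.decomp α hα
  exact Submodule.sum_mem _ fun β hβ => Submodule.smul_mem _ _ (Submodule.subset_span hβ)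

noncomputable def basis : Module.Basis C.S ℝ V :=
  Module.Basis.mk C.indep (by rw [Subtype.range_coe_subtype]; exact C.span_eq_top.ge)

noncomputable def coord (γ : V) : V →ₗ[ℝ] ℝ :=
  if h : γ ∈ C.S then C.basis.coord ⟨γ, h⟩ else 0

lemma coord_simple {γ η : V} (hγ : γ ∈ C.S) (hη : η ∈ C.S) :
    C.coord γ η = if η = γ then 1 else 0 := by
  have : η = C.basis ⟨η, hη⟩ := by simp [basis]
  rw [coord, dif_pos hγ, this, Module.Basis.coord_apply, Module.Basis.repr_self,
    Finsupp.single_apply]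
  simp [Subtype.ext_iff, basis]

lemma coord_self {γ : V} (hγ : γ ∈ C.S) : C.coord γ γ = 1 := by
  simp [C.coord_simple hγ hγ]

lemma coord_of_ne {γ η : V} (hγ : γ ∈ C.S) (hη : η ∈ C.S) (hne : η ≠ γ) : C.coord γ η = 0 := by
  simp [C.coord_simple hγ hη, hne]

lemma coord_simple_nonneg {γ η : V} (hγ : γ ∈ C.S) (hη : η ∈ C.S) : 0 ≤ C.coord γ η := by
  rw [C.coord_simple hγ hη]
  split_ifs <;> norm_num

lemma sum_coord_smul (u : V) : ∑ γ ∈ C.S, C.coord γ u • γ = u := by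
  conv_rhs => rw [← C.basis.sum_repr u]
  rw [← Finset.sum_attach C.S, ← Finset.univ_eq_attach]
  refine Finset.sum_congr rfl fun γ _ => ?_
  simp [coord, basis]

lemma coord_sum_smul (c : V → ℝ) {γ : V} (hγ : γ ∈ C.S) :
    C.coord γ (∑ β ∈ C.S, c β • β) = c γ := by
  rw [map_sum, Finset.sum_eq_single γ (fun β hβ hne => by rw [map_smul, C.coord_of_ne hγ hβ hne,
    smul_zero]) (absurd hγ), map_smul, C.coord_self hγ, smul_eq_mul, mul_one]

lemma apply_eq_sum_coord (f : V →ₗ[ℝ] ℝ) (u : V) : f u = ∑ γ ∈ C.S, C.coord γ u * f γ := by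
  conv_lhs => rw [← C.sum_coord_smul u]
  simp [map_sum]

lemma inner_eq_sum_coord (μ β : V) : ⟪μ, β⟫ = ∑ η ∈ C.S, C.coord η β * ⟪μ, η⟫ :=
  C.apply_eq_sum_coord (innerₛₗ ℝ μ) β

lemma pairing_eq_sum_coord (v z : V) : pairing v z = ∑ η ∈ C.S, C.coord η v * pairing η z :=
  C.apply_eq_sum_coord (coroot z) v

lemma pairing_le_coord_mul {γ v z : V} (hγ : γ ∈ C.S) (hv : ∀ η ∈ C.S, η ≠ γ → 0 ≤ C.coord η v)
    (hz : ∀ η ∈ C.S, η ≠ γ → pairing η z ≤ 0) : pairing v z ≤ C.coord γ v * pairing γ z := by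
  rw [C.pairing_eq_sum_coord, ← Finset.add_sum_erase _ _ hγ, add_le_iff_nonpos_right]
  exact Finset.sum_nonpos fun η hη => mul_nonpos_of_nonneg_of_nonpos
    (hv η (Finset.mem_of_mem_erase hη) (Finset.ne_of_mem_erase hη))
    (hz η (Finset.mem_of_mem_erase hη) (Finset.ne_of_mem_erase hη))

lemma coord_mem_range_intCast_of_mem_Δ {γ β : V} (hγ : γ ∈ C.S) (hβ : β ∈ R.Δ) :
    C.coord γ β ∈ (Int.castAddHom ℝ).range := by
  obtain ⟨c, rfl, -⟩ := C.decomp β hβ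
  exact ⟨c γ, by simp [C.coord_sum_smul _ hγ]⟩

lemma coord_mem_range_intCast {γ v : V} (hγ : γ ∈ C.S) (hv : v ∈ rootLattice R) :
    C.coord γ v ∈ (Int.castAddHom ℝ).range :=
  (AddSubgroup.closure_le ((Int.castAddHom ℝ).range.comap (C.coord γ).toAddMonoidHom)).2
    (fun _ hβ => C.coord_mem_range_intCast_of_mem_Δ hγ hβ) hv

def cone : Set V := {v | ∀ γ ∈ C.S, 0 ≤ C.coord γ v}

lemma isPos_iff {β : V} : C.IsPos β ↔ β ∈ R.Δ ∧ β ∈ C.cone := by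
  refine ⟨fun ⟨hβ, c, hc⟩ => ⟨hβ, fun γ hγ => ?_⟩, fun ⟨hβ, hcone⟩ => ⟨hβ, ?_⟩⟩
  · rw [hc, C.coord_sum_smul _ hγ]
    positivity
  · refine ⟨fun γ => ⌊C.coord γ β⌋₊, ?_⟩
    conv_lhs => rw [← C.sum_coord_smul β]
    refine Finset.sum_congr rfl fun γ hγ => ?_
    obtain ⟨n, hn⟩ := C.coord_mem_range_intCast_of_mem_Δ hγ hβ
    simp only [Int.coe_castAddHom] at hn
    have hn0 : (0 : ℝ) ≤ n := hn ▸ hcone γ hγ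
    lift n to ℕ using by exact_mod_cast hn0
    simp only [← hn, Int.cast_natCast, Nat.floor_natCast]

variable {C} in
lemma IsPos.mem_cone {β : V} (h : C.IsPos β) : β ∈ C.cone := ((C.isPos_iff).1 h).2

variable {C} in
lemma IsPos.ne_zero {β : V} (h : C.IsPos β) : β ≠ 0 := R.nonzero β h.1

lemma isPos_of_mem {γ : V} (hγ : γ ∈ C.S) : C.IsPos γ :=
  (C.isPos_iff).2 ⟨C.mem_Δ hγ, fun _ hη => C.coord_simple_nonneg hη hγ⟩

lemma isPos_or_isPos_neg {β : V} (hβ : β ∈ R.Δ) : C.IsPos β ∨ C.IsPos (-β) := by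
  obtain ⟨c, hc, hsign | hsign⟩ := C.decomp β hβ
  · refine Or.inl ((C.isPos_iff).2 ⟨hβ, fun γ hγ => ?_⟩)
    rw [hc, C.coord_sum_smul _ hγ]
    exact_mod_cast hsign γ hγ
  · refine Or.inr ((C.isPos_iff).2 ⟨R.neg_mem β hβ, fun γ hγ => ?_⟩)
    rw [hc, map_neg, C.coord_sum_smul _ hγ, neg_nonneg]
    exact_mod_cast hsign γ hγ

lemma coord_nonneg_or_nonpos {β : V} (hβ : β ∈ R.Δ) :
    β ∈ C.cone ∨ ∀ γ ∈ C.S, C.coord γ β ≤ 0 :=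
  (C.isPos_or_isPos_neg hβ).imp (·.mem_cone) fun h γ hγ => by
    simpa using h.mem_cone γ hγ

lemma exists_coord_pos_of_ne {δ γ : V} (hδ : C.IsPos δ) (hγ : γ ∈ C.S) (hne : δ ≠ γ) :
    ∃ η ∈ C.S, η ≠ γ ∧ 0 < C.coord η δ := by
  by_contra! h
  have hδγ : δ = C.coord γ δ • γ := by
    conv_lhs => rw [← C.sum_coord_smul δ]
    refine Finset.sum_eq_single γ (fun η hη hne => ?_) (absurd hγ)
    rw [le_antisymm (h η hη hne) (hδ.mem_cone η hη), zero_smul]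
  rcases R.reduced γ (C.mem_Δ hγ) _ (hδγ ▸ hδ.1) with h1 | h1
  · exact hne (by rw [hδγ, h1, one_smul])
  · have := hδ.mem_cone γ hγ
    linarith

lemma coord_fireRoot_of_ne {α η : V} (hα : α ∈ C.S) (hη : η ∈ C.S) (hne : η ≠ α) (u : V) :
    C.coord η (fireRoot u α) = C.coord η u := by
  rw [fireRoot, map_sub, map_smul, C.coord_of_ne hη hα hne.symm, smul_zero, sub_zero]

lemma isPos_fireRoot {β α : V} (hβ : C.IsPos β) (hα : α ∈ C.S) (hne : β ≠ α) :
    C.IsPos (fireRoot β α) := by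
  have hroot : fireRoot β α ∈ R.Δ := R.reflect_mem α (C.mem_Δ hα) β hβ.1
  obtain ⟨η, hη, hηα, hpos⟩ := C.exists_coord_pos_of_ne hβ hα hne
  refine (C.isPos_iff).2 ⟨hroot, (C.coord_nonneg_or_nonpos hroot).resolve_right fun h => ?_⟩
  have := h η hη
  rw [C.coord_fireRoot_of_ne hα hη hηα] at this
  linarith

lemma pairing_nonpos_of_ne {γ η : V} (hγ : γ ∈ C.S) (hη : η ∈ C.S) (hne : γ ≠ η) :
    pairing γ η ≤ 0 := by
  have hroot : fireRoot γ η ∈ R.Δ := R.reflect_mem η (C.mem_Δ hη) γ (C.mem_Δ hγ)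
  have hcoord : C.coord η (fireRoot γ η) = -pairing γ η := by
    rw [fireRoot, map_sub, map_smul, C.coord_of_ne hη hγ hne, C.coord_self hη, smul_eq_mul,
      mul_one, zero_sub]
  rcases C.coord_nonneg_or_nonpos hroot with h | h
  · linarith [h η hη]
  · have := h γ hγ
    rw [C.coord_fireRoot_of_ne hη hγ hne, C.coord_self hγ] at this
    linarith

lemma inner_nonpos_of_ne {γ η : V} (hγ : γ ∈ C.S) (hη : η ∈ C.S) (hne : γ ≠ η) : ⟪γ, η⟫ ≤ 0 := by
  have := C.pairing_nonpos_of_ne hγ hη hne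
  rw [pairing_eq_mul_inner] at this
  exact nonpos_of_mul_nonpos_right this (two_div_inner_self_pos (C.ne_zero hη))

lemma exists_wall {δ : V} (hδ : C.IsPos δ) : ∃ γ ∈ C.S, 0 < C.coord γ δ ∧ 0 < pairing γ δ := by
  by_contra! h
  have hsum := C.pairing_eq_sum_coord δ δ
  rw [pairing_self hδ.ne_zero] at hsum
  have : ∑ γ ∈ C.S, C.coord γ δ * pairing γ δ ≤ 0 := Finset.sum_nonpos fun γ hγ =>
    (hδ.mem_cone γ hγ).eq_or_lt.elim (fun h0 => by rw [← h0, zero_mul])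
      fun hpos => mul_nonpos_of_nonneg_of_nonpos hpos.le (h γ hγ hpos)
  linarith

/-- The support of a positive root is connected in the Dynkin diagram. -/
lemma exists_coord_pos_inner_ne_zero {δ γ : V} (hδ : C.IsPos δ) (hγ : γ ∈ C.S) (hne : δ ≠ γ)
    (hc : 0 < C.coord γ δ) : ∃ η ∈ C.S, η ≠ γ ∧ 0 < C.coord η δ ∧ ⟪γ, η⟫ ≠ 0 := by
  by_contra! h
  have hinner : ⟪γ, δ⟫ = C.coord γ δ * ⟪γ, γ⟫ := by
    rw [C.inner_eq_sum_coord]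
    refine Finset.sum_eq_single γ (fun η hη hηγ => ?_) (absurd hγ)
    rcases (hδ.mem_cone η hη).eq_or_lt with h0 | hpos
    · rw [← h0, zero_mul]
    · rw [h η hη hηγ hpos, mul_zero]
  have hpairing : pairing δ γ = 2 * C.coord γ δ := by
    refine mul_right_cancel₀ (real_inner_self_pos.2 (C.ne_zero hγ)).ne' ?_
    rw [pairing_mul_inner_self δ (C.ne_zero hγ), real_inner_comm, hinner]
    ring
  have := (C.isPos_fireRoot hδ hγ hne).mem_cone γ hγ
  rw [fireRoot, map_sub, map_smul, C.coord_self hγ, hpairing, smul_eq_mul] at this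
  linarith

lemma pos_of_isPos (f : V →ₗ[ℝ] ℝ) (hf : ∀ γ ∈ C.S, 0 < f γ) {β : V} (hβ : C.IsPos β) :
    0 < f β := by
  rw [C.apply_eq_sum_coord f]
  obtain ⟨γ, hγ, hγβ⟩ : ∃ γ ∈ C.S, C.coord γ β ≠ 0 := by
    by_contra! h
    exact hβ.ne_zero (by
      rw [← C.sum_coord_smul β]
      exact Finset.sum_eq_zero fun γ hγ => by rw [h γ hγ, zero_smul])
  exact Finset.sum_pos' (fun γ hγ => mul_nonneg (hβ.mem_cone γ hγ) (hf γ hγ).le)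
    ⟨γ, hγ, mul_pos ((hβ.mem_cone γ hγ).lt_of_ne' hγβ) (hf γ hγ)⟩

lemma apply_ne_zero (f : V →ₗ[ℝ] ℝ) (hf : ∀ γ ∈ C.S, 0 < f γ) {β : V} (hβ : β ∈ R.Δ) :
    f β ≠ 0 := by
  intro h0
  rcases C.isPos_or_isPos_neg hβ with h | h
  · linarith [C.pos_of_isPos f hf h]
  · have := C.pos_of_isPos f hf h
    rw [map_neg] at this
    linarith

lemma isPos_of_pos (f : V →ₗ[ℝ] ℝ) (hf : ∀ γ ∈ C.S, 0 < f γ) {β : V} (hβ : β ∈ R.Δ)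
    (h : 0 < f β) : C.IsPos β :=
  (C.isPos_or_isPos_neg hβ).resolve_right fun hneg => by
    have := C.pos_of_isPos f hf hneg
    rw [map_neg] at this
    linarith

noncomputable def height : V →ₗ[ℝ] ℝ := ∑ γ ∈ C.S, C.coord γ

lemma height_of_mem {γ : V} (hγ : γ ∈ C.S) : C.height γ = 1 := by
  rw [height, LinearMap.sum_apply, Finset.sum_eq_single γ
    (fun η hη hne => C.coord_of_ne hη hγ hne.symm) (absurd hγ), C.coord_self hγ]

lemma one_le_height {β : V} (hβ : C.IsPos β) : 1 ≤ C.height β := by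
  refine one_le_of_mem_range_intCast ?_
    (C.pos_of_isPos _ (fun γ hγ => by simp [C.height_of_mem hγ]) hβ)
  rw [height, LinearMap.sum_apply]
  exact AddSubgroup.sum_mem _ fun γ hγ => C.coord_mem_range_intCast_of_mem_Δ hγ hβ.1

lemma height_fireRoot {α : V} (hα : α ∈ C.S) (u : V) :
    C.height (fireRoot u α) = C.height u - pairing u α := by
  rw [fireRoot, map_sub, map_smul, C.height_of_mem hα, smul_eq_mul, mul_one]

section Map

noncomputable def map (e : V ≃ₗ[ℝ] V) (he : ∀ β, e β ∈ R.Δ ↔ β ∈ R.Δ) : Base R where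
  S := C.S.map e.toEquiv.toEmbedding
  subset := by
    intro _ hmem
    obtain ⟨β, hβ, rfl⟩ := Finset.mem_map.1 hmem
    exact (he β).2 (C.mem_Δ hβ)
  indep := (linearIndependent_equiv (Equiv.subtypeEquiv e.toEquiv fun _ => by simp)).1
    (C.indep.map' e.toLinearMap e.ker)
  decomp α hα := by
    obtain ⟨c, hc, hsign⟩ := C.decomp (e.symm α) ((he _).1 (by simpa using hα))
    refine ⟨c ∘ e.symm, ?_, ?_⟩
    · rw [Finset.sum_map, ← e.apply_symm_apply α, hc, map_sum]
      simp
    · rcases hsign with h | h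
      · exact Or.inl fun β hβ => h _ (by simpa using hβ)
      · exact Or.inr fun β hβ => h _ (by simpa using hβ)

variable {e : V ≃ₗ[ℝ] V} {he : ∀ β, e β ∈ R.Δ ↔ β ∈ R.Δ}

lemma coord_map {η : V} (hη : η ∈ C.S) (u : V) :
    (C.map e he).coord (e η) u = C.coord η (e.symm u) := by
  have hu : u = ∑ β ∈ (C.map e he).S, C.coord (e.symm β) (e.symm u) • β := by
    conv_lhs => rw [← e.apply_symm_apply u, ← C.sum_coord_smul (e.symm u)]
    simp [map, Finset.sum_map, map_sum]
  conv_lhs => rw [hu]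
  rw [coord_sum_smul _ _ (by simpa [map] using hη), e.symm_apply_apply]

lemma mem_cone_map_iff {u : V} : u ∈ (C.map e he).cone ↔ e.symm u ∈ C.cone := by
  refine ⟨fun h η hη => ?_, fun h β hβ => ?_⟩
  · simpa [C.coord_map hη] using h (e η) (by simpa [map] using hη)
  · obtain ⟨η, hη, rfl⟩ := Finset.mem_map.1 hβ
    simpa [C.coord_map hη] using h η hη

lemma isPos_map_iff {u : V} : (C.map e he).IsPos u ↔ C.IsPos (e.symm u) := by
  rw [isPos_iff, isPos_iff, mem_cone_map_iff, ← he (e.symm u), e.apply_symm_apply]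

lemma height_map (u : V) : (C.map e he).height u = C.height (e.symm u) := by
  simp only [height, LinearMap.sum_apply]
  rw [show (C.map e he).S = C.S.map e.toEquiv.toEmbedding from rfl, Finset.sum_map]
  exact Finset.sum_congr rfl fun η hη => C.coord_map hη u

end Map

section Reflect

/-- The base of the chamber adjacent to `C` across the wall of `γ`. -/
noncomputable def reflect {γ : V} (hγ : γ ∈ C.S) : Base R :=
  C.map (rootReflection (C.ne_zero hγ)) fun β => by
    refine ⟨fun h => ?_, R.reflect_mem γ (C.mem_Δ hγ) β⟩
    have : fireRoot (fireRoot β γ) γ ∈ R.Δ := R.reflect_mem γ (C.mem_Δ hγ) _ h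
    rwa [fireRoot_fireRoot β (C.ne_zero hγ)] at this

variable {γ : V} (hγ : γ ∈ C.S)

lemma mem_reflect_iff {β : V} : β ∈ (C.reflect hγ).S ↔ ∃ η ∈ C.S, β = fireRoot η γ := by
  simp only [reflect, map, Finset.mem_map, Equiv.coe_toEmbedding, LinearEquiv.coe_toEquiv,
    rootReflection_apply]
  exact exists_congr fun η => and_congr_right fun _ => eq_comm

lemma coord_reflect {η : V} (hη : η ∈ C.S) (u : V) :
    (C.reflect hγ).coord (fireRoot η γ) u = C.coord η (fireRoot u γ) :=
  C.coord_map hη u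

lemma isPos_reflect_iff {u : V} : (C.reflect hγ).IsPos u ↔ C.IsPos (fireRoot u γ) :=
  C.isPos_map_iff

lemma height_reflect (u : V) : (C.reflect hγ).height u = C.height (fireRoot u γ) :=
  C.height_map u

end Reflect

lemma ext {C C' : Base R} (h : C.S = C'.S) : C = C' := by
  cases C; cases C'; cases h; rfl

instance : Finite (Base R) :=
  Finite.of_injective (fun C : Base R => (⟨C.S, Finset.mem_powerset.2 fun _ hβ =>
      R.finite.mem_toFinset.2 (C.subset hβ)⟩ : R.finite.toFinset.powerset))
    fun _ _ h => ext (congrArg Subtype.val h)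

/-- A simple root of `C` is a positive root of `C'` whose `C`-height is `1`, while every simple root
of `C'` has `C`-height at least `1`. -/
lemma subset_of_forall_pos {C C' : Base R} (f : V →ₗ[ℝ] ℝ) (hC : ∀ γ ∈ C.S, 0 < f γ)
    (hC' : ∀ γ ∈ C'.S, 0 < f γ) : C.S ⊆ C'.S := by
  intro γ hγ
  obtain ⟨-, n, hn⟩ := C'.isPos_of_pos f hC' (C.mem_Δ hγ) (hC γ hγ)
  have hheight : ∀ η ∈ C'.S, 1 ≤ C.height η := fun η hη =>
    C.one_le_height (C.isPos_of_pos f hC (C'.mem_Δ hη) (hC' η hη))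
  have hsum : ∑ η ∈ C'.S, (n η : ℝ) * C.height η = 1 := by
    rw [← C.height_of_mem hγ, hn, map_sum]
    simp only [map_smul, smul_eq_mul]
  have hle : ∑ η ∈ C'.S, n η ≤ 1 := by
    have : ((∑ η ∈ C'.S, n η : ℕ) : ℝ) ≤ 1 := by
      rw [Nat.cast_sum, ← hsum]
      exact Finset.sum_le_sum fun η hη => le_mul_of_one_le_right (Nat.cast_nonneg _) (hheight η hη)
    exact_mod_cast this
  obtain ⟨η, hη, hnη⟩ : ∃ η ∈ C'.S, n η ≠ 0 := by
    by_contra! h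
    exact C.ne_zero hγ (by rw [hn]; exact Finset.sum_eq_zero fun η hη => by simp [h η hη])
  have hsplit := Finset.add_sum_erase C'.S n hη
  have hrest : ∀ ξ ∈ C'.S.erase η, n ξ = 0 := Finset.sum_eq_zero_iff.1 (by omega)
  have hγη : γ = η := by
    rw [hn, Finset.sum_eq_single η
      (fun ξ hξ hne => by simp [hrest ξ (Finset.mem_erase.2 ⟨hne, hξ⟩)]) (absurd hη),
      show n η = 1 by omega, Nat.cast_one, one_smul]
  exact hγη ▸ hη

lemma eq_of_pos_of_nonneg {C C' : Base R} (f : V →ₗ[ℝ] ℝ) (hC : ∀ γ ∈ C.S, 0 < f γ)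
    (hC' : ∀ γ ∈ C'.S, 0 ≤ f γ) : C' = C := by
  have hC'pos : ∀ γ ∈ C'.S, 0 < f γ := fun γ hγ =>
    (hC' γ hγ).lt_of_ne' (C.apply_ne_zero f hC (C'.mem_Δ hγ))
  exact ext (subset_antisymm (subset_of_forall_pos f hC'pos hC) (subset_of_forall_pos f hC hC'pos))

end Base

namespace IsDominant

variable {C : Base R} {μ : V}

lemma inner_simple_nonneg (h : IsDominant C μ) {η : V} (hη : η ∈ C.S) : 0 ≤ ⟪μ, η⟫ :=
  (pairing_nonneg_iff (C.ne_zero hη)).1 (h η hη)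

lemma pairing_nonneg (h : IsDominant C μ) {β : V} (hβ : C.IsPos β) : 0 ≤ pairing μ β := by
  rw [pairing_nonneg_iff hβ.ne_zero, C.inner_eq_sum_coord]
  exact Finset.sum_nonneg fun η hη => mul_nonneg (hβ.mem_cone η hη) (h.inner_simple_nonneg hη)

lemma inner_eq_zero (h : IsDominant C μ) {β : V} (hβ : β ∈ C.cone) (h0 : ⟪μ, β⟫ = 0) {η : V}
    (hη : η ∈ C.S) (hc : 0 < C.coord η β) : ⟪μ, η⟫ = 0 := by
  rw [C.inner_eq_sum_coord] at h0
  have := (Finset.sum_eq_zero_iff_of_nonneg fun ξ hξ =>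
    mul_nonneg (hβ ξ hξ) (h.inner_simple_nonneg hξ)).1 h0 η hη
  exact (mul_eq_zero.1 this).resolve_left hc.ne'

end IsDominant

namespace AmplePolytope

variable (P : AmplePolytope R) {C : Base R}

lemma exists_sub_reflect {γ : V} (hγ : γ ∈ C.S) :
    ∃ r : ℤ, 0 < r ∧ P.μ C - P.μ (C.reflect hγ) = (r : ℝ) • γ :=
  P.ample C _ γ hγ fun _ => C.mem_reflect_iff hγ

lemma apply_simple_nonneg_of_forall_le (f : V →ₗ[ℝ] ℝ) (hC : ∀ C', f (P.μ C') ≤ f (P.μ C))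
    {γ : V} (hγ : γ ∈ C.S) : 0 ≤ f γ := by
  obtain ⟨r, hr, h⟩ := P.exists_sub_reflect hγ
  have hle := sub_nonneg.2 (hC (C.reflect hγ))
  rw [← map_sub, h, map_smul, smul_eq_mul] at hle
  exact nonneg_of_mul_nonneg_right hle (by exact_mod_cast hr)

/-- Perturb `f` to `f + ε • C.height`, strictly positive on `C.S`: by `Base.eq_of_pos_of_nonneg`
its maximum over the vertices is attained at `C`. Then let `ε → 0`. -/
lemma apply_le_apply_of_nonneg (f : V →ₗ[ℝ] ℝ) (hf : ∀ γ ∈ C.S, 0 ≤ f γ) (C' : Base R) :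
    f (P.μ C') ≤ f (P.μ C) := by
  have hpert : ∀ ε > 0, f (P.μ C') + ε * C.height (P.μ C') ≤ f (P.μ C) + ε * C.height (P.μ C) := by
    intro ε hε
    let F := f + ε • C.height
    have hF : ∀ γ ∈ C.S, 0 < F γ := fun γ hγ => by
      simp only [F, LinearMap.add_apply, LinearMap.smul_apply, C.height_of_mem hγ, smul_eq_mul]
      linarith [hf γ hγ]
    have : Nonempty (Base R) := ⟨C⟩
    obtain ⟨Cm, hCm⟩ := Finite.exists_max fun C'' => F (P.μ C'')
    obtain rfl : Cm = C := Base.eq_of_pos_of_nonneg F hF fun γ hγ =>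
      P.apply_simple_nonneg_of_forall_le F hCm hγ
    simpa [F] using hCm C'
  have hlim : Tendsto (fun ε => f (P.μ C) + ε * (C.height (P.μ C) - C.height (P.μ C')))
      (𝓝[>] 0) (𝓝 (f (P.μ C))) := by
    have : Continuous fun ε : ℝ => f (P.μ C) + ε * (C.height (P.μ C) - C.height (P.μ C')) := by
      fun_prop
    simpa using (this.tendsto 0).mono_left nhdsWithin_le_nhds
  exact ge_of_tendsto hlim (eventually_nhdsWithin_of_forall fun ε hε => by linarith [hpert ε hε])

lemma sub_mem_cone_of_mem_carrier {x : V} (hx : x ∈ P.carrier) (C : Base R) :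
    P.μ C - x ∈ C.cone := by
  intro γ hγ
  have hsub : P.carrier ⊆ {v | C.coord γ v ≤ C.coord γ (P.μ C)} :=
    convexHull_min (Set.range_subset_iff.2 fun C' => P.apply_le_apply_of_nonneg _
      (fun _ hη => C.coord_simple_nonneg hγ hη) C') (convex_halfSpace_le (C.coord γ).isLinear _)
  simpa [map_sub] using hsub hx

lemma mem_carrier_of_forall_mem_cone [Nonempty (Base R)] {y : V} (h : ∀ C, P.μ C - y ∈ C.cone) :
    y ∈ P.carrier := by
  by_contra hy
  obtain ⟨f, u, hf, hfy⟩ := geometric_hahn_banach_closed_point (convex_convexHull ℝ _)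
    ((Set.finite_range P.μ).isCompact_convexHull ℝ).isClosed hy
  obtain ⟨Cm, hCm⟩ := Finite.exists_max fun C => f (P.μ C)
  have hpos : 0 ≤ f.toLinearMap (P.μ Cm - y) := by
    rw [Cm.apply_eq_sum_coord]
    exact Finset.sum_nonneg fun γ hγ =>
      mul_nonneg (h Cm γ hγ) (P.apply_simple_nonneg_of_forall_le f.toLinearMap hCm hγ)
  have := hf _ (subset_convexHull ℝ _ ⟨Cm, rfl⟩)
  simp only [map_sub, ContinuousLinearMap.coe_coe] at hpos
  linarith

end AmplePolytope

namespace IsSpecial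

variable {P : AmplePolytope R}

lemma isDominant (hP : IsSpecial P) (C : Base R) : IsDominant C (P.μ C) :=
  hP C

/-- Specialness at the adjacent chamber `C.reflect hγ`, whose vertex is `μ_C - r γ` with `r > 0`. -/
lemma inner_eq_zero (hP : IsSpecial P) {C : Base R} {γ η : V} (hγ : γ ∈ C.S) (hη : η ∈ C.S)
    (hne : η ≠ γ) (hμγ : ⟪P.μ C, γ⟫ = 0) (hμη : ⟪P.μ C, η⟫ = 0) : ⟪γ, η⟫ = 0 := by
  obtain ⟨r, hr, hμ⟩ := P.exists_sub_reflect hγ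
  have hmem : fireRoot η γ ∈ (C.reflect hγ).S := (C.mem_reflect_iff hγ).2 ⟨η, hη, rfl⟩
  have h := (pairing_nonneg_iff ((C.reflect hγ).ne_zero hmem)).1 (hP _ _ hmem)
  have hcalc : ⟪P.μ (C.reflect hγ), fireRoot η γ⟫ = r * ⟪γ, η⟫ := by
    rw [show P.μ (C.reflect hγ) = P.μ C - (r : ℝ) • γ by rw [← hμ]; abel, fireRoot]
    simp only [inner_sub_left, inner_sub_right, real_inner_smul_left, real_inner_smul_right, hμγ,
      hμη]
    have hpγ := pairing_mul_inner_self η (C.ne_zero hγ)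
    rw [real_inner_comm γ η] at hpγ
    linear_combination (r : ℝ) * hpγ
  rw [hcalc] at h
  exact le_antisymm (C.inner_nonpos_of_ne hγ hη hne.symm)
    (nonneg_of_mul_nonneg_right h (by exact_mod_cast hr))

end IsSpecial

namespace AmplePolytope

variable (P : AmplePolytope R) {C : Base R}

lemma coord_nonneg_of_mem_cone_reflect {γ y : V} (hγ : γ ∈ C.S)
    (h : P.μ (C.reflect hγ) - y ∈ (C.reflect hγ).cone) {η : V} (hη : η ∈ C.S) (hne : η ≠ γ) :
    0 ≤ C.coord η (P.μ C - y) := by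
  obtain ⟨r, -, hμ⟩ := P.exists_sub_reflect hγ
  have := h _ ((C.mem_reflect_iff hγ).2 ⟨η, hη, rfl⟩)
  rwa [C.coord_reflect hγ hη, C.coord_fireRoot_of_ne hγ hη hne,
    show P.μ (C.reflect hγ) - y = P.μ C - y - (r : ℝ) • γ by rw [← hμ]; abel, map_sub, map_smul,
    C.coord_of_ne hη hγ hne.symm, smul_zero, sub_zero] at this

/-- If the `γ`-coordinate were `≤ -1`, the two estimates of `⟨μ_C - x - δ, δ^∨⟩` would force
`⟨μ_C, δ^∨⟩ = 0` and `⟨γ, δ^∨⟩ = 1`. Then `μ_C` is orthogonal to the support of `δ`, and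
specialness at the adjacent chamber makes `γ` orthogonal to the rest of that support. -/
lemma coord_nonneg_of_unique_wall (hP : IsSpecial P) {x δ γ : V}
    (hint : C.coord γ (P.μ C - x) ∈ (Int.castAddHom ℝ).range) (hδ : C.IsPos δ) (hγ : γ ∈ C.S)
    (hc : 0 < C.coord γ δ) (hwall : 0 < pairing γ δ)
    (hunique : ∀ η ∈ C.S, η ≠ γ → pairing η δ ≤ 0) (hxδ : pairing x δ ≤ -1)
    (hoff : ∀ η ∈ C.S, η ≠ γ → 0 ≤ C.coord η (P.μ C - (x + δ))) :
    0 ≤ C.coord γ (P.μ C - (x + δ)) := by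
  by_contra! hneg
  have hc0 : C.coord γ (P.μ C - (x + δ)) ≤ -1 := by
    refine le_neg_one_of_mem_range_intCast ?_ hneg
    rw [← sub_sub, map_sub]
    exact sub_mem hint (C.coord_mem_range_intCast_of_mem_Δ hγ hδ.1)
  have hp := R.one_le_pairing (C.mem_Δ hγ) hδ.1 hwall
  have hle := C.pairing_le_coord_mul hγ hoff hunique
  have hμδ := (hP.isDominant C).pairing_nonneg hδ
  rw [pairing_sub_left, pairing_add_left, pairing_self hδ.ne_zero] at hle
  have hμδ0 : pairing (P.μ C) δ = 0 := by nlinarith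
  have hp1 : pairing γ δ = 1 := by nlinarith
  have hδγ : δ ≠ γ := by
    rintro rfl
    rw [pairing_self hδ.ne_zero] at hp1
    norm_num at hp1
  obtain ⟨η, hη, hne, hcη, hinner⟩ := C.exists_coord_pos_inner_ne_zero hδ hγ hδγ hc
  have h0 : ⟪P.μ C, δ⟫ = 0 := (pairing_eq_zero_iff hδ.ne_zero).1 hμδ0
  exact hinner (hP.inner_eq_zero hγ hη hne
    ((hP.isDominant C).inner_eq_zero hδ.mem_cone h0 hγ hc)
    ((hP.isDominant C).inner_eq_zero hδ.mem_cone h0 hη hcη))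

theorem sub_add_mem_cone_of_isPos (hP : IsSpecial P) {x : V} (hx : x ∈ latticePts P) (n : ℕ) :
    ∀ (C : Base R) (δ : V), C.IsPos δ → C.height δ ≤ n → pairing x δ ≤ -1 →
      P.μ C - (x + δ) ∈ C.cone := by
  have hcone := P.sub_mem_cone_of_mem_carrier hx.1
  induction n with
  | zero =>
    intro C δ hδ hn _
    linarith [C.one_le_height hδ, (by exact_mod_cast hn : C.height δ ≤ 0)]
  | succ n ih =>
    intro C δ hδ hn hxδ
    have hcross : ∀ γ (hγ : γ ∈ C.S), δ ≠ γ → 0 < pairing δ γ →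
        ∀ η ∈ C.S, η ≠ γ → 0 ≤ C.coord η (P.μ C - (x + δ)) := by
      intro γ hγ hδγ hwall η hη hne
      refine P.coord_nonneg_of_mem_cone_reflect hγ (ih _ δ
        ((C.isPos_reflect_iff hγ).2 (C.isPos_fireRoot hδ hγ hδγ)) ?_ hxδ) hη hne
      rw [C.height_reflect, C.height_fireRoot hγ]
      push_cast at hn
      linarith [R.one_le_pairing hδ.1 (C.mem_Δ hγ) hwall]
    obtain ⟨γ, hγ, hc, hwall⟩ := C.exists_wall hδ
    have hoff : ∀ η ∈ C.S, η ≠ γ → 0 ≤ C.coord η (P.μ C - (x + δ)) := by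
      by_cases hδγ : δ = γ
      · intro η hη hne
        rw [← sub_sub, map_sub, hδγ, C.coord_of_ne hη hγ hne.symm, sub_zero]
        exact hcone C η hη
      · exact hcross γ hγ hδγ ((pairing_pos_comm _ _).1 hwall)
    intro η hη
    rcases eq_or_ne η γ with rfl | hne
    · by_cases hsecond : ∃ γ' ∈ C.S, γ' ≠ η ∧ 0 < pairing γ' δ
      · obtain ⟨γ', hγ', hne', hwall'⟩ := hsecond
        have hδγ' : δ ≠ γ' := by
          rintro rfl
          rw [C.coord_of_ne hη hγ' hne'] at hc
          exact lt_irrefl 0 hc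
        exact hcross γ' hγ' hδγ' ((pairing_pos_comm _ _).1 hwall') η hη hne'.symm
      · simp only [not_exists, not_and, not_lt] at hsecond
        refine P.coord_nonneg_of_unique_wall hP ?_ hδ hη hc hwall hsecond hxδ hoff
        exact C.coord_mem_range_intCast hη (by simpa using neg_mem (hx.2 C))
    · exact hoff η hη hne

theorem add_root_mem_latticePts (hP : IsSpecial P) {x δ : V} (hx : x ∈ latticePts P)
    (hδ : δ ∈ R.Δ) (hxδ : pairing x δ ≤ -1) : x + δ ∈ latticePts P := by
  have : Nonempty (Base R) :=
    Set.range_nonempty_iff_nonempty.1 (convexHull_nonempty_iff.1 ⟨x, hx.1⟩)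
  refine ⟨P.mem_carrier_of_forall_mem_cone fun C => ?_, fun C => ?_⟩
  · rcases C.isPos_or_isPos_neg hδ with hpos | hneg
    · exact P.sub_add_mem_cone_of_isPos hP hx _ C δ hpos (Nat.le_ceil _) hxδ
    · intro γ hγ
      have h1 := P.sub_mem_cone_of_mem_carrier hx.1 C γ hγ
      have h2 := hneg.mem_cone γ hγ
      rw [map_neg] at h2
      rw [← sub_sub, map_sub]
      linarith
  · rw [add_sub_right_comm]
    exact add_mem (hx.2 C) (AddSubgroup.subset_closure hδ)

end AmplePolytope

namespace WinningCrit

variable {B : Base R} {x α : V}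

lemma add_simple (hwin : WinningCrit B x) (hα : α ∈ B.S) (h : pairing x α = -1) :
    WinningCrit B (x + α) := by
  intro β hβ
  rw [pairing_add_left]
  rcases eq_or_ne β α with rfl | hne
  · rw [h, pairing_self hβ.ne_zero]
    norm_num
  · have := hwin _ (B.isPos_fireRoot hβ hα hne)
    rw [pairing_fireRoot_right x hβ.ne_zero (B.ne_zero hα), h] at this
    linarith

lemma sub_simple (hwin : WinningCrit B x) (hα : α ∈ B.S) (h : 1 ≤ pairing x α) :
    WinningCrit B (x - α) := by
  intro β hβ
  rw [pairing_sub_left]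
  rcases eq_or_ne β α with rfl | hne
  · rw [pairing_self hβ.ne_zero]
    linarith
  rcases le_or_gt (pairing α β) 0 with hαβ | hαβ
  · linarith [hwin β hβ]
  · have := hwin _ (B.isPos_fireRoot hβ hα hne)
    rw [pairing_fireRoot_right x hβ.ne_zero (B.ne_zero hα)] at this
    nlinarith [R.one_le_pairing (B.mem_Δ hα) hβ.1 hαβ]

end WinningCrit

theorem stmt19_general {V : Type*} [NormedAddCommGroup V] [InnerProductSpace ℝ V]
    {R : RootSystemData V} (B : Base R) (m : ℕ)
    (P : Fin m → AmplePolytope R) (hP : ∀ i, IsSpecial (P i))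
    (x : Fin m → V) (hx : ∀ i, x i ∈ latticePts (P i))
    (hwin : ∀ i, WinningCrit B (x i))
    (α : V) (hα : α ∈ B.S) (j k : Fin m)
    (hj : pairing (x j) α ≤ -1) (hk : 1 ≤ pairing (x k) α)
    (x' : Fin m → V)
    (hx'j : x' j = x j + α) (hx'k : x' k = x k - α)
    (hx'other : ∀ l : Fin m, l ≠ j → l ≠ k → x' l = x l) :
    (∀ i, x' i ∈ latticePts (P i)) ∧ ∀ i, WinningCrit B (x' i) := by
  have hj' : pairing (x j) α = -1 := le_antisymm hj (hwin j α (B.isPos_of_mem hα))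
  have hk' : pairing (x k) (-α) ≤ -1 := by
    rw [pairing_neg_right]
    linarith
  have hmove : ∀ i, x' i ∈ latticePts (P i) ∧ WinningCrit B (x' i) := by
    intro i
    by_cases hij : i = j
    · subst hij
      rw [hx'j]
      exact ⟨(P i).add_root_mem_latticePts (hP i) (hx i) (B.mem_Δ hα) hj,
        (hwin i).add_simple hα hj'⟩
    by_cases hik : i = k
    · subst hik
      rw [hx'k]
      refine ⟨?_, (hwin i).sub_simple hα hk⟩
      rw [sub_eq_add_neg]
      exact (P i).add_root_mem_latticePts (hP i) (hx i) (R.neg_mem α (B.mem_Δ hα)) hk'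
    rw [hx'other i hij hik]
    exact ⟨hx i, hwin i⟩
  exact ⟨fun i => (hmove i).1, fun i => (hmove i).2⟩

/-- Simple moves preserve membership in `Λ(P₁) × ⋯ × Λ(P_m)` and preserve
winningness of every entry: if each `x_ℓ ∈ Λ(P_ℓ)` is winning (`⟨x_ℓ, β^∨⟩ ≥ -1` for all
positive roots `β`), `α` is a simple root, and `j ≠ k` are indices with
`⟨x_j, α^∨⟩ ≤ -1` and `⟨x_k, α^∨⟩ ≥ 1`, then the tuple obtained by replacing `x_j` with
`x_j + α` and `x_k` with `x_k - α` again lies in `Λ(P₁) × ⋯ × Λ(P_m)` and consists of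
winning elements. -/
theorem stmt19 {V : Type*} [NormedAddCommGroup V] [InnerProductSpace ℝ V]
    [FiniteDimensional ℝ V] {R : RootSystemData V} (B : Base R) (m : ℕ)
    (P : Fin m → AmplePolytope R) (hP : ∀ i, IsSpecial (P i))
    (x : Fin m → V) (hx : ∀ i, x i ∈ latticePts (P i))
    (hwin : ∀ i, WinningCrit B (x i))
    (α : V) (hα : α ∈ B.S) (j k : Fin m) (hjk : j ≠ k)
    (hj : pairing (x j) α ≤ -1) (hk : 1 ≤ pairing (x k) α)
    (x' : Fin m → V)
    (hx'j : x' j = x j + α) (hx'k : x' k = x k - α)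
    (hx'other : ∀ l : Fin m, l ≠ j → l ≠ k → x' l = x l) :
    (∀ i, x' i ∈ latticePts (P i)) ∧ ∀ i, WinningCrit B (x' i) :=
  stmt19_general B m P hP x hx hwin α hα j k hj hk x' hx'j hx'k hx'other
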